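/- arXiv:2508.02907 — 10 statements merged into one kernel-verified Lean document; each statement's English description precedes it below -/
import Mathlib

section
/- Let 0 < p < q be real numbers and let a_1, ..., a_n be nonnegative real numbers. If for every index j one has a_j^{1/p} ≤ ∑_{i ≠ j} a_i^{1/p}, then for every index j one has a_j^{1/q} ≤ ∑_{i ≠ j} a_i^{1/q}. -/
lemma my_rpow_add_le (x y : ℝ) (hx : 0 ≤ x) (hy : 0 ≤ y) {r : ℝ} (h0 : 0 ≤ r) (h1 : r ≤ 1) :
    (x + y) ^ r ≤ x ^ r + y ^ r := by
  lift x to NNReal using hx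
  lift y to NNReal using hy
  have := NNReal.rpow_add_le_add_rpow x y h0 h1
  exact_mod_cast this

lemma my_sum_rpow_le {ι : Type*} (s : Finset ι) (f : ι → ℝ) (hf : ∀ i ∈ s, 0 ≤ f i)
    {r : ℝ} (h0 : 0 < r) (h1 : r ≤ 1) :
    (∑ i ∈ s, f i) ^ r ≤ ∑ i ∈ s, f i ^ r := by
  classical
  induction s using Finset.induction with
  | empty => simp [Real.zero_rpow h0.ne']
  | @insert c s hi ih =>
    rw [Finset.sum_insert hi, Finset.sum_insert hi]
    have hfa : 0 ≤ f c := hf c (Finset.mem_insert_self c s)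
    have hfs : ∀ i ∈ s, 0 ≤ f i := fun i hi' => hf i (Finset.mem_insert_of_mem hi')
    calc (f c + ∑ i ∈ s, f i) ^ r ≤ f c ^ r + (∑ i ∈ s, f i) ^ r :=
          my_rpow_add_le _ _ hfa (Finset.sum_nonneg hfs) h0.le h1
      _ ≤ f c ^ r + ∑ i ∈ s, f i ^ r := by linarith [ih hfs]

theorem stmt1 (n : ℕ) (p q : ℝ) (hp : 0 < p) (hpq : p < q)
    (a : Fin n → ℝ) (ha : ∀ i, 0 ≤ a i)
    (h : ∀ j, a j ^ (1/p) ≤ ∑ i ∈ Finset.univ.erase j, a i ^ (1/p)) :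
    ∀ j, a j ^ (1/q) ≤ ∑ i ∈ Finset.univ.erase j, a i ^ (1/q) := by
  intro j
  have hq : 0 < q := hp.trans hpq
  have hr0 : 0 < p / q := div_pos hp hq
  have hr1 : p / q ≤ 1 := (div_le_one hq).2 hpq.le
  have key : ∀ i, a i ^ (1/q) = (a i ^ (1/p)) ^ (p/q) := by
    intro i
    rw [← Real.rpow_mul (ha i)]
    congr 1
    field_simp
  rw [key j]
  calc (a j ^ (1/p)) ^ (p/q)
      ≤ (∑ i ∈ Finset.univ.erase j, a i ^ (1/p)) ^ (p/q) :=
        Real.rpow_le_rpow (Real.rpow_nonneg (ha j) _) (h j) hr0.le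
    _ ≤ ∑ i ∈ Finset.univ.erase j, (a i ^ (1/p)) ^ (p/q) :=
        my_sum_rpow_le _ _ (fun i _ => Real.rpow_nonneg (ha i) _) hr0 hr1
    _ = ∑ i ∈ Finset.univ.erase j, a i ^ (1/q) := by
        exact Finset.sum_congr rfl (fun i _ => (key i).symm)
end

section
/- Nonnegative real numbers a_1, ..., a_n (n ≥ 3) satisfy a_i ≤ ∑_{j ≠ i} a_j for all i if and only if there exist points p_0 = p_n, p_1, ..., p_{n-1} in the Euclidean plane ℝ² such that dist(p_{k-1}, p_k) = a_k for all k = 1, ..., n. -/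
/-!
Writing the sides as vectors `a k • u k` with unit vectors `u k`, a closed polygon is the same
thing as a vanishing sum `∑ k, a k • u k = 0`, its vertices being the partial sums. Necessity is
then the triangle inequality for `-(a i • u i) = ∑ j ≠ i, a j • u j`. For sufficiency, cut the
sides at a weighted median `i`: the sides before `i` and those after `i` have total lengths
`b₁, b₃` of at most half the perimeter, so `b₁, a i, b₃` satisfy the triangle inequalities.
A triangle with these side lengths, found in `ℂ` by the intermediate value theorem, lets all
sides before `i` point one way and all sides after `i` another.
-/

open Finset

theorem Fin.partialSum_last {M : Type*} [AddCommMonoid M] {n : ℕ} (f : Fin n → M) :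
    Fin.partialSum f (Fin.last n) = ∑ i, f i := by
  simp [Fin.partialSum, List.take_of_length_le, List.sum_ofFn]

theorem Fin.sum_succ_sub_castSucc {G : Type*} [AddCommGroup G] {n : ℕ} (p : Fin (n + 1) → G) :
    ∑ i : Fin n, (p i.succ - p i.castSucc) = p (Fin.last n) - p 0 := by
  have h := congrFun (Fin.partialSum_left_neg p) (Fin.last n)
  rw [Pi.vadd_apply, vadd_eq_add, Fin.partialSum_last] at h
  rw [← h, add_sub_cancel_left]
  simp [sub_eq_neg_add]

theorem Complex.exists_add_mul_add_mul_eq_zero {b₁ b₂ b₃ : ℝ} (h₁ : |b₁ - b₃| ≤ b₂)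
    (h₂ : b₂ ≤ |b₁ + b₃|) :
    ∃ v w : ℂ, ‖v‖ = 1 ∧ ‖w‖ = 1 ∧ b₁ + b₂ * v + b₃ * w = 0 := by
  let f : ℝ → ℝ := fun θ => ‖(b₁ + b₃ * exp (θ * I) : ℂ)‖
  have hf : Continuous f := by fun_prop
  obtain ⟨θ, -, hθ⟩ : b₂ ∈ f '' Set.Icc 0 Real.pi := by
    refine intermediate_value_Icc' Real.pi_pos.le hf.continuousOn ⟨?_, ?_⟩
    · simpa [f, ← sub_eq_add_neg, ← Complex.ofReal_sub, Complex.norm_real] using h₁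
    · simpa [f, ← Complex.ofReal_add, Complex.norm_real] using h₂
  set z : ℂ := -(b₁ + b₃ * exp (θ * I))
  refine ⟨exp (z.arg * I), exp (θ * I), norm_exp_ofReal_mul_I _, norm_exp_ofReal_mul_I _, ?_⟩
  have hz : ‖z‖ = b₂ := by rw [norm_neg]; exact hθ
  rw [← hz, norm_mul_exp_arg_mul_I]
  ring

section LinearOrder

variable {ι M : Type*} [LinearOrder ι] [Fintype ι] [LocallyFiniteOrderBot ι]
  [LocallyFiniteOrderTop ι]

theorem Finset.sum_Iio_add_add_sum_Ioi [AddCommMonoid M] (f : ι → M) (i : ι) :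
    ∑ j ∈ Iio i, f j + f i + ∑ j ∈ Ioi i, f j = ∑ j, f j := by
  rw [sum_Iio_add_eq_sum_Iic, ← sum_filter_add_sum_filter_not univ (· ≤ i), filter_ge_eq_Iic]
  congr 2
  ext; simp

theorem exists_two_mul_sum_Iio_le_and_two_mul_sum_Ioi_le [Nonempty ι] {a : ι → ℝ}
    (ha : ∀ i, 0 ≤ a i) :
    ∃ i, 2 * ∑ j ∈ Iio i, a j ≤ ∑ j, a j ∧ 2 * ∑ j ∈ Ioi i, a j ≤ ∑ j, a j := by
  set T := ∑ j, a j
  have hT : 0 ≤ T := sum_nonneg fun j _ => ha j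
  set s := univ.filter fun i => T ≤ 2 * ∑ j ∈ Iic i, a j
  have hs : s.Nonempty := by
    obtain ⟨m, -, hm⟩ := univ.exists_max_image id (univ_nonempty (α := ι))
    have : Iic m = univ := by ext; simpa using hm _
    exact ⟨m, mem_filter.2 ⟨mem_univ m, by rw [this]; linarith⟩⟩
  set i := s.min' hs
  have hi : T ≤ 2 * ∑ j ∈ Iic i, a j := (mem_filter.1 (s.min'_mem hs)).2
  have hsplit := sum_Iio_add_add_sum_Ioi a i
  rw [sum_Iio_add_eq_sum_Iic] at hsplit
  refine ⟨i, ?_, by linarith⟩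
  rcases (Iio i).eq_empty_or_nonempty with hempty | hne
  · simpa [hempty] using hT
  · set j := (Iio i).max' hne
    have hji : j < i := mem_Iio.1 ((Iio i).max'_mem hne)
    have hIio : Iio i = Iic j := by
      ext k
      exact ⟨fun hk => mem_Iic.2 ((Iio i).le_max' k hk),
        fun hk => mem_Iio.2 ((mem_Iic.1 hk).trans_lt hji)⟩
    have hj : j ∉ s := fun hj => hji.not_ge (s.min'_le j hj)
    rw [hIio]
    simp only [s, mem_filter, mem_univ, true_and, not_le] at hj
    linarith

theorem exists_norm_eq_one_sum_mul_eq_zero {a : ι → ℝ} (ha : ∀ i, 0 ≤ a i)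
    (h : ∀ i, a i ≤ ∑ j ∈ univ.erase i, a j) :
    ∃ u : ι → ℂ, (∀ i, ‖u i‖ = 1) ∧ ∑ i, a i * u i = 0 := by
  cases isEmpty_or_nonempty ι
  · exact ⟨1, by simp, by simp⟩
  obtain ⟨i, h₁, h₃⟩ := exists_two_mul_sum_Iio_le_and_two_mul_sum_Ioi_le ha
  have hsplit := sum_Iio_add_add_sum_Ioi a i
  have hi := h i
  rw [sum_erase_eq_sub (mem_univ i)] at hi
  set b₁ := ∑ j ∈ Iio i, a j
  set b₃ := ∑ j ∈ Ioi i, a j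
  have hb₁ : 0 ≤ b₁ := sum_nonneg fun j _ => ha j
  have hb₃ : 0 ≤ b₃ := sum_nonneg fun j _ => ha j
  obtain ⟨v, w, hv, hw, hvw⟩ :=
    Complex.exists_add_mul_add_mul_eq_zero (b₁ := b₁) (b₂ := a i) (b₃ := b₃)
      (abs_sub_le_iff.2 ⟨by linarith, by linarith⟩)
      (by rw [abs_of_nonneg (by positivity)]; linarith)
  set u : ι → ℂ := fun j => if j < i then 1 else if j = i then v else w
  refine ⟨u, fun j => by simp only [u]; split_ifs <;> simp [*], ?_⟩
  have hIio : ∑ j ∈ Iio i, (a j : ℂ) * u j = b₁ := by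
    rw [Complex.ofReal_sum]
    exact sum_congr rfl fun j hj => by simp [u, mem_Iio.1 hj]
  have hIoi : ∑ j ∈ Ioi i, (a j : ℂ) * u j = b₃ * w := by
    rw [Complex.ofReal_sum, sum_mul]
    exact sum_congr rfl fun j hj => by simp [u, (mem_Ioi.1 hj).not_gt, (mem_Ioi.1 hj).ne']
  rw [← sum_Iio_add_add_sum_Ioi, hIio, hIoi, ← hvw]
  simp [u]

end LinearOrder

theorem exists_closed_polygon_of_sum_eq_zero {E : Type*} [SeminormedAddCommGroup E] {n : ℕ}
    (f : Fin n → E) (hf : ∑ k, f k = 0) :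
    ∃ p : Fin (n + 1) → E, p 0 = p (Fin.last n) ∧ ∀ k, dist (p k.castSucc) (p k.succ) = ‖f k‖ :=
  ⟨Fin.partialSum f, by rw [Fin.partialSum_zero, Fin.partialSum_last, hf], fun k => by
    rw [Fin.partialSum_succ, dist_self_add_right]⟩

theorem norm_le_sum_erase_norm_of_sum_eq_zero {ι E : Type*} [SeminormedAddCommGroup E]
    [Fintype ι] [DecidableEq ι] {f : ι → E} (hf : ∑ j, f j = 0) (i : ι) :
    ‖f i‖ ≤ ∑ j ∈ univ.erase i, ‖f j‖ := by
  have : f i = -∑ j ∈ univ.erase i, f j := by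
    rw [eq_neg_iff_add_eq_zero, add_sum_erase _ _ (mem_univ i), hf]
  rw [this, norm_neg]
  exact norm_sum_le _ _

theorem stmt4_general (n : ℕ) (a : Fin n → ℝ) (ha : ∀ i, 0 ≤ a i) :
    (∀ i, a i ≤ ∑ j ∈ Finset.univ.erase i, a j) ↔
      ∃ p : Fin (n+1) → EuclideanSpace ℝ (Fin 2),
        p 0 = p (Fin.last n) ∧ ∀ k : Fin n, dist (p k.castSucc) (p k.succ) = a k := by
  constructor
  · intro h
    obtain ⟨u, hu, hsum⟩ := exists_norm_eq_one_sum_mul_eq_zero ha h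
    let e := Complex.orthonormalBasisOneI.repr
    obtain ⟨p, hp, hd⟩ := exists_closed_polygon_of_sum_eq_zero (fun k => e (a k * u k))
      (by rw [← map_sum, hsum, map_zero])
    refine ⟨p, hp, fun k => ?_⟩
    rw [hd, LinearIsometryEquiv.norm_map, norm_mul, hu, Complex.norm_real,
      Real.norm_of_nonneg (ha k), mul_one]
  · rintro ⟨p, hp, hd⟩ i
    have hsum : ∑ k : Fin n, (p k.succ - p k.castSucc) = 0 := by
      rw [Fin.sum_succ_sub_castSucc, hp, sub_self]
    simpa only [← dist_eq_norm', hd] using norm_le_sum_erase_norm_of_sum_eq_zero hsum i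

theorem stmt4 (n : ℕ) (hn : 3 ≤ n) (a : Fin n → ℝ) (ha : ∀ i, 0 ≤ a i) :
    (∀ i, a i ≤ ∑ j ∈ Finset.univ.erase i, a j) ↔
      ∃ p : Fin (n+1) → EuclideanSpace ℝ (Fin 2),
        p 0 = p (Fin.last n) ∧ ∀ k : Fin n, dist (p k.castSucc) (p k.succ) = a k :=
  stmt4_general n a ha
end

section
/- Let V be a finite-dimensional normed real vector space, X ⊆ V a closed set, and x_* ∈ X a point such that for every x ∈ X and every t ∈ [0,1), the point x_* + t·(x − x_*) lies in the topological interior of X. Then the map ψ : V → ℝ defined by ψ(x) = inf { t > 0 : x_* + (x − x_*)/t ∈ X } is continuous. -/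
theorem stmt7 {V : Type*} [NormedAddCommGroup V] [NormedSpace ℝ V] [FiniteDimensional ℝ V]
    (X : Set V) (x0 : V) (hx0 : x0 ∈ X) (hX : IsClosed X)
    (hss : ∀ x ∈ X, ∀ t ∈ Set.Ico (0:ℝ) 1, x0 + t • (x - x0) ∈ interior X) :
    Continuous (fun x : V => sInf {t : ℝ | 0 < t ∧ x0 + t⁻¹ • (x - x0) ∈ X}) := by
  have hbdd : ∀ x : V, BddBelow {t : ℝ | 0 < t ∧ x0 + t⁻¹ • (x - x0) ∈ X} :=
    fun x => ⟨0, fun t ht => ht.1.le⟩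
  have hx0i : x0 ∈ interior X := by
    have := hss x0 hx0 0 ⟨le_rfl, one_pos⟩
    simpa using this
  obtain ⟨r, hr, hball⟩ := Metric.isOpen_iff.1 isOpen_interior x0 hx0i
  have hne : ∀ x : V, (‖x - x0‖ / r + 1) ∈ {t : ℝ | 0 < t ∧ x0 + t⁻¹ • (x - x0) ∈ X} := by
    intro x
    have hpos : (0:ℝ) < ‖x - x0‖ / r + 1 := by positivity
    refine ⟨hpos, interior_subset (hball ?_)⟩
    rw [Metric.mem_ball, dist_eq_norm, add_sub_cancel_left, norm_smul,
      norm_inv, Real.norm_eq_abs, abs_of_pos hpos]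
    rw [inv_mul_lt_iff₀ hpos]
    have hr' : (‖x - x0‖ / r + 1) * r = ‖x - x0‖ + r := by field_simp
    rw [hr']
    linarith
  have hup : ∀ x : V, ∀ s t : ℝ, (0 < s ∧ x0 + s⁻¹ • (x - x0) ∈ X) → s < t →
      (0 < t ∧ x0 + t⁻¹ • (x - x0) ∈ X) := by
    rintro x s t ⟨hs, hsX⟩ hst
    have ht : 0 < t := hs.trans hst
    refine ⟨ht, ?_⟩
    have h3 : (s / t) * s⁻¹ = t⁻¹ := by
      rw [div_mul_eq_mul_div, mul_inv_cancel₀ hs.ne', one_div]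
    have h1 : x0 + (s / t) • ((x0 + s⁻¹ • (x - x0)) - x0) = x0 + t⁻¹ • (x - x0) := by
      rw [add_sub_cancel_left, smul_smul, h3]
    have h2 := hss _ hsX (s / t) ⟨by positivity, (div_lt_one ht).2 hst⟩
    rw [h1] at h2
    exact interior_subset h2
  rw [continuous_iff_continuousAt]
  intro x
  rw [ContinuousAt, tendsto_order]
  constructor
  · intro a ha
    rcases lt_or_ge a 0 with h0 | h0
    · filter_upwards with y
      exact h0.trans_le (le_csInf ⟨_, hne y⟩ fun t ht => ht.1.le)
    · obtain ⟨t, hat, htx⟩ := exists_between ha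
      have ht0 : 0 < t := h0.trans_lt hat
      have hnot : x0 + t⁻¹ • (x - x0) ∉ X := by
        intro hmem
        exact absurd (csInf_le (hbdd x) ⟨ht0, hmem⟩) (not_le.2 htx)
      have hcont : Continuous fun y : V => x0 + t⁻¹ • (y - x0) :=
        continuous_const.add ((continuous_id.sub continuous_const).const_smul t⁻¹)
      have hopen : IsOpen ((fun y : V => x0 + t⁻¹ • (y - x0)) ⁻¹' Xᶜ) :=
        hX.isOpen_compl.preimage hcont
      filter_upwards [hopen.mem_nhds hnot] with y hy
      refine hat.trans_le (le_of_not_gt fun hlt => ?_)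
      obtain ⟨s, hs, hst⟩ := exists_lt_of_csInf_lt ⟨_, hne y⟩ hlt
      exact hy (hup y s t hs hst).2
  · intro b hb
    obtain ⟨t, hxt, htb⟩ := exists_between hb
    obtain ⟨s, hs, hst⟩ := exists_lt_of_csInf_lt ⟨_, hne x⟩ hxt
    have ht0 : 0 < t := hs.1.trans hst
    have hint : x0 + t⁻¹ • (x - x0) ∈ interior X := by
      have h3 : (s / t) * s⁻¹ = t⁻¹ := by
        rw [div_mul_eq_mul_div, mul_inv_cancel₀ hs.1.ne', one_div]
      have h1 : x0 + (s / t) • ((x0 + s⁻¹ • (x - x0)) - x0) = x0 + t⁻¹ • (x - x0) := by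
        rw [add_sub_cancel_left, smul_smul, h3]
      have h2 := hss _ hs.2 (s / t) ⟨(div_pos hs.1 ht0).le, (div_lt_one ht0).2 hst⟩
      rwa [h1] at h2
    have hcont : Continuous fun y : V => x0 + t⁻¹ • (y - x0) :=
        continuous_const.add ((continuous_id.sub continuous_const).const_smul t⁻¹)
    have hopen : IsOpen ((fun y : V => x0 + t⁻¹ • (y - x0)) ⁻¹' interior X) :=
      isOpen_interior.preimage hcont
    filter_upwards [hopen.mem_nhds hint] with y hy
    exact (csInf_le (hbdd y) ⟨ht0, interior_subset hy⟩).trans_lt htb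
end

section
/- Let V be a finite-dimensional normed real vector space and let (x_*, X, V) be strongly star-shaped (X closed, and x_* + t·(x − x_*) is interior to X for all x ∈ X, t ∈ [0,1)). Let B ⊆ V be the closed unit ball centered at the origin, S the unit sphere, and S(x_*, X) = { x ∈ S : x_* + s·x ∈ X for all s ≥ 0 }. Then X is homeomorphic to B \ S(x_*, X). -/
/-!
Translate `x_*` to the origin and let `ψ` be the gauge of `Y = X - x_*`. Strong star-shapedness
makes `Y` absorbent, `Y = {ψ ≤ 1}` and `ψ` continuous; moreover `ψ x = 0` exactly when the ray
through `x` stays in `Y`. With the positively homogeneous `g = ‖·‖ - ψ`, the radial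
rescalings `y ↦ y / (1 + g y)` and `x ↦ x / (1 - g x)` are mutually inverse, and they exchange
`Y = {ψ ≤ 1}` with `B \ S = {‖x‖ ≤ 1, g x < 1}`.
-/

open Set Metric Filter Topology Pointwise

section RadialRescale

variable {V : Type*} [AddCommGroup V] [Module ℝ V]

noncomputable def radialRescale (g : V → ℝ) (x : V) : V := (1 + g x)⁻¹ • x

-- With `a = 1 + g x`, homogeneity gives `1 - g (a⁻¹ • x) = a⁻¹`.
theorem radialRescale_neg_radialRescale {g : V → ℝ}
    (hg : ∀ r : ℝ, 0 ≤ r → ∀ x, g (r • x) = r * g x) {x : V} (hx : 0 < 1 + g x) :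
    radialRescale (-g) (radialRescale g x) = x := by
  have hinv : 1 + -((1 + g x)⁻¹ * g x) = (1 + g x)⁻¹ := by
    field_simp
    ring
  rw [radialRescale, radialRescale, Pi.neg_apply, hg _ (inv_nonneg.2 hx.le), hinv, smul_smul,
    inv_inv, mul_inv_cancel₀ hx.ne', one_smul]

variable [TopologicalSpace V] [ContinuousSMul ℝ V]

theorem continuousOn_radialRescale {g : V → ℝ} (hg : Continuous g) {A : Set V}
    (hA : ∀ x ∈ A, 1 + g x ≠ 0) : ContinuousOn (radialRescale g) A :=
  ((continuous_const.add hg).continuousOn.inv₀ hA).smul continuousOn_id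

noncomputable def radialHomeomorph {g : V → ℝ} (hg : Continuous g)
    (hhom : ∀ r : ℝ, 0 ≤ r → ∀ x, g (r • x) = r * g x) {A B : Set V}
    (hA : ∀ x ∈ A, 0 < 1 + g x) (hB : ∀ y ∈ B, 0 < 1 - g y)
    (hAB : MapsTo (radialRescale g) A B) (hBA : MapsTo (radialRescale (-g)) B A) : A ≃ₜ B where
  toFun := hAB.restrict
  invFun := hBA.restrict
  left_inv x := Subtype.ext (radialRescale_neg_radialRescale hhom (hA x x.2))
  right_inv y := Subtype.ext <| by
    simpa using radialRescale_neg_radialRescale (g := -g)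
      (fun r hr x => by simp [hhom r hr x]) (by simpa [← sub_eq_add_neg] using hB y y.2)
  continuous_toFun :=
    (continuousOn_radialRescale hg fun x hx => (hA x hx).ne').mapsToRestrict hAB
  continuous_invFun :=
    (continuousOn_radialRescale hg.neg fun y hy => by
      simpa [← sub_eq_add_neg] using (hB y hy).ne').mapsToRestrict hBA

end RadialRescale

section StronglyStarShaped

variable {V : Type*} [AddCommGroup V] [Module ℝ V] [TopologicalSpace V]

/-- Strong star-shapedness about the origin; the paper's centre `x_*` is moved to `0` by a
translation. -/
def IsStronglyStarShaped (Y : Set V) : Prop :=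
  ∀ y ∈ Y, ∀ t ∈ Ico (0 : ℝ) 1, t • y ∈ interior Y

theorem isStronglyStarShaped_preimage_add [IsTopologicalAddGroup V] {X : Set V} {x₀ : V}
    (hX : ∀ x ∈ X, ∀ t ∈ Ico (0 : ℝ) 1, x₀ + t • (x - x₀) ∈ interior X) :
    IsStronglyStarShaped ((x₀ + ·) ⁻¹' X) := by
  intro y hy t ht
  change t • y ∈ interior (Homeomorph.addLeft x₀ ⁻¹' X)
  rw [← (Homeomorph.addLeft x₀).preimage_interior]
  simpa using hX _ hy t ht

namespace IsStronglyStarShaped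

variable {Y : Set V}

theorem zero_mem_interior (hY : IsStronglyStarShaped Y) (h0 : (0 : V) ∈ Y) :
    (0 : V) ∈ interior Y := by
  simpa using hY 0 h0 0 ⟨le_rfl, zero_lt_one⟩

variable [ContinuousSMul ℝ V]

theorem mem_interior_of_gauge_lt_one (hY : IsStronglyStarShaped Y) (h0 : (0 : V) ∈ Y) {x : V}
    (hx : gauge Y x < 1) : x ∈ interior Y := by
  have hYabs : Absorbent ℝ Y :=
    absorbent_nhds_zero (mem_interior_iff_mem_nhds.1 (hY.zero_mem_interior h0))
  obtain ⟨b, hb0, hb1, y, hy, rfl⟩ := exists_lt_of_gauge_lt hYabs hx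
  exact hY y hy b ⟨hb0.le, hb1⟩

theorem gauge_le_one_iff (hY : IsStronglyStarShaped Y) (h0 : (0 : V) ∈ Y) (hYc : IsClosed Y)
    {x : V} : gauge Y x ≤ 1 ↔ x ∈ Y := by
  refine ⟨fun hx => ?_, gauge_le_one_of_mem⟩
  -- `x` is the limit of `t • x` as `t → 1⁻`, and these lie in `Y` since `gauge Y (t • x) < 1`.
  have hray : ∀ᶠ t in 𝓝[<] (1 : ℝ), t • x ∈ Y := by
    filter_upwards [Ioo_mem_nhdsLT zero_lt_one] with t ht
    refine interior_subset (hY.mem_interior_of_gauge_lt_one h0 ?_)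
    rw [gauge_smul_of_nonneg ht.1.le, smul_eq_mul]
    exact (mul_le_of_le_one_right ht.1.le hx).trans_lt ht.2
  have hlim : Tendsto (fun t : ℝ => t • x) (𝓝[<] 1) (𝓝 x) := by
    simpa using (tendsto_nhdsWithin_of_tendsto_nhds (tendsto_id (x := 𝓝 (1 : ℝ)))).smul_const x
  exact hYc.mem_of_tendsto hlim hray

theorem gauge_eq_zero_iff (hY : IsStronglyStarShaped Y) (h0 : (0 : V) ∈ Y) (hYc : IsClosed Y)
    {x : V} : gauge Y x = 0 ↔ ∀ s : ℝ, 0 ≤ s → s • x ∈ Y := by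
  refine ⟨fun hx s hs => ?_, fun hx => ?_⟩
  · rw [← hY.gauge_le_one_iff h0 hYc, gauge_smul_of_nonneg hs, hx, smul_zero]
    exact zero_le_one
  · refine le_antisymm (le_of_forall_pos_le_add fun r hr => ?_) (gauge_nonneg x)
    rw [zero_add]
    exact gauge_le_of_mem hr.le <|
      (mem_smul_set_iff_inv_smul_mem₀ hr.ne' _ _).2 (hx _ (inv_nonneg.2 hr.le))

theorem continuous_gauge (hY : IsStronglyStarShaped Y) (h0 : (0 : V) ∈ Y) (hYc : IsClosed Y) :
    Continuous (gauge Y) := by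
  have gauge_inv_smul : ∀ {r : ℝ} (x : V), 0 < r → gauge Y (r⁻¹ • x) = gauge Y x / r :=
    fun x hr => by rw [gauge_smul_of_nonneg (inv_nonneg.2 hr.le), smul_eq_mul, inv_mul_eq_div]
  -- Near `x`, `gauge Y` stays above `r` on the open set `(r • Y)ᶜ` and below `r` on
  -- the open set `r • interior Y`.
  refine continuous_iff_lower_upperSemicontinuous.2 ⟨fun x c (hc : c < gauge Y x) => ?_,
    fun x c (hc : gauge Y x < c) => ?_⟩
  · rcases lt_or_ge c 0 with hc0 | hc0
    · exact Eventually.of_forall fun x' => hc0.trans_le (gauge_nonneg x')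
    obtain ⟨r, hcr, hrx⟩ := exists_between hc
    have hr : 0 < r := hc0.trans_lt hcr
    have hx_mem : r⁻¹ • x ∈ Yᶜ := by
      rw [mem_compl_iff, ← hY.gauge_le_one_iff h0 hYc, gauge_inv_smul x hr, div_le_one hr]
      exact hrx.not_ge
    filter_upwards [(hYc.isOpen_compl.preimage (continuous_const_smul r⁻¹)).mem_nhds hx_mem]
      with x' hx'
    rw [mem_preimage, mem_compl_iff, ← hY.gauge_le_one_iff h0 hYc, gauge_inv_smul x' hr,
      div_le_one hr] at hx'
    linarith
  · obtain ⟨r, hxr, hrc⟩ := exists_between hc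
    have hr : 0 < r := (gauge_nonneg x).trans_lt hxr
    have hx_mem : r⁻¹ • x ∈ interior Y := by
      refine hY.mem_interior_of_gauge_lt_one h0 ?_
      rwa [gauge_inv_smul x hr, div_lt_one hr]
    filter_upwards [(isOpen_interior.preimage (continuous_const_smul r⁻¹)).mem_nhds hx_mem]
      with x' hx'
    have := (hY.gauge_le_one_iff h0 hYc).2 (interior_subset hx')
    rw [gauge_inv_smul x' hr, div_le_one hr] at this
    linarith

end IsStronglyStarShaped

end StronglyStarShaped

section NormedSpace

variable {V : Type*} [NormedAddCommGroup V] [NormedSpace ℝ V] {Y : Set V}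

theorem norm_sub_gauge_smul_of_nonneg (r : ℝ) (hr : 0 ≤ r) (x : V) :
    ‖r • x‖ - gauge Y (r • x) = r * (‖x‖ - gauge Y x) := by
  rw [norm_smul, Real.norm_of_nonneg hr, gauge_smul_of_nonneg hr, smul_eq_mul, mul_sub]

theorem one_add_norm_sub_gauge_pos {y : V} (hy : y ∈ Y) : 0 < 1 + (‖y‖ - gauge Y y) := by
  rcases eq_or_ne y 0 with rfl | hy0
  · simp
  · linarith [norm_pos_iff.2 hy0, gauge_le_one_of_mem hy]

theorem mapsTo_radialRescale_norm_sub_gauge :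
    MapsTo (radialRescale fun x => ‖x‖ - gauge Y x) Y
      {x | ‖x‖ ≤ 1 ∧ ‖x‖ - gauge Y x < 1} := by
  intro y hy
  have ha := one_add_norm_sub_gauge_pos hy
  simp only [radialRescale, mem_ofPred_eq]
  rw [norm_sub_gauge_smul_of_nonneg _ (inv_nonneg.2 ha.le), norm_smul,
    Real.norm_of_nonneg (inv_nonneg.2 ha.le), inv_mul_le_one₀ ha, inv_mul_lt_one₀ ha]
  constructor <;> linarith [gauge_le_one_of_mem hy]

theorem IsStronglyStarShaped.mapsTo_radialRescale_gauge_sub_norm (hY : IsStronglyStarShaped Y)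
    (h0 : (0 : V) ∈ Y) (hYc : IsClosed Y) :
    MapsTo (radialRescale (-fun x => ‖x‖ - gauge Y x))
      {x | ‖x‖ ≤ 1 ∧ ‖x‖ - gauge Y x < 1} Y := by
  rintro x ⟨hx1, hx⟩
  have hb : 0 < 1 + -(‖x‖ - gauge Y x) := by linarith
  rw [radialRescale, Pi.neg_apply, ← hY.gauge_le_one_iff h0 hYc,
    gauge_smul_of_nonneg (inv_nonneg.2 hb.le), smul_eq_mul, inv_mul_le_one₀ hb]
  linarith

theorem IsStronglyStarShaped.closedBall_diff_rays_eq (hY : IsStronglyStarShaped Y)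
    (h0 : (0 : V) ∈ Y) (hYc : IsClosed Y) :
    closedBall (0 : V) 1 \ {z ∈ sphere (0 : V) 1 | ∀ s : ℝ, 0 ≤ s → s • z ∈ Y} =
      {x | ‖x‖ ≤ 1 ∧ ‖x‖ - gauge Y x < 1} := by
  ext x
  simp only [Set.mem_sdiff, mem_closedBall, mem_sphere, dist_zero_right, mem_ofPred_eq,
    ← hY.gauge_eq_zero_iff h0 hYc, not_and]
  refine and_congr_right fun hx1 => ⟨fun hx => ?_, fun hx _ hg => by linarith⟩
  rcases hx1.lt_or_eq with hx1 | hx1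
  · linarith [gauge_nonneg (s := Y) x]
  · linarith [(gauge_nonneg x).lt_of_ne' (hx hx1)]

theorem IsStronglyStarShaped.nonempty_homeomorph_closedBall_diff (hY : IsStronglyStarShaped Y)
    (h0 : (0 : V) ∈ Y) (hYc : IsClosed Y) :
    Nonempty (Y ≃ₜ
      ↥(closedBall (0 : V) 1 \ {z ∈ sphere (0 : V) 1 | ∀ s : ℝ, 0 ≤ s → s • z ∈ Y})) := by
  rw [hY.closedBall_diff_rays_eq h0 hYc]
  exact ⟨radialHomeomorph (continuous_norm.sub (hY.continuous_gauge h0 hYc))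
    norm_sub_gauge_smul_of_nonneg (fun y hy => one_add_norm_sub_gauge_pos hy)
    (fun x hx => sub_pos.2 hx.2) mapsTo_radialRescale_norm_sub_gauge
    (hY.mapsTo_radialRescale_gauge_sub_norm h0 hYc)⟩

end NormedSpace

theorem stmt8_general {V : Type*} [NormedAddCommGroup V] [NormedSpace ℝ V]
    (X : Set V) (x0 : V) (hx0 : x0 ∈ X) (hX : IsClosed X)
    (hss : ∀ x ∈ X, ∀ t ∈ Set.Ico (0:ℝ) 1, x0 + t • (x - x0) ∈ interior X) :
    Nonempty (↥X ≃ₜ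
      ↥(Metric.closedBall (0:V) 1 \
        {z ∈ Metric.sphere (0:V) 1 | ∀ s : ℝ, 0 ≤ s → x0 + s • z ∈ X})) := by
  obtain ⟨e⟩ := (isStronglyStarShaped_preimage_add hss).nonempty_homeomorph_closedBall_diff
    (by simpa using hx0) (hX.preimage (continuous_const_add x0))
  exact ⟨((Homeomorph.addLeft x0).sets rfl).symm.trans e⟩

theorem stmt8 {V : Type*} [NormedAddCommGroup V] [NormedSpace ℝ V] [FiniteDimensional ℝ V]
    (X : Set V) (x0 : V) (hx0 : x0 ∈ X) (hX : IsClosed X)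
    (hss : ∀ x ∈ X, ∀ t ∈ Set.Ico (0:ℝ) 1, x0 + t • (x - x0) ∈ interior X) :
    Nonempty (↥X ≃ₜ
      ↥(Metric.closedBall (0:V) 1 \
        {z ∈ Metric.sphere (0:V) 1 | ∀ s : ℝ, 0 ≤ s → x0 + s • z ∈ X})) :=
  stmt8_general X x0 hx0 hX hss
end

section
/- Every strongly star-shaped subset of a finite-dimensional normed real vector space is a topological manifold with boundary. -/
/-!
Translate the centre to `0` and let `g` be the gauge of `X`. Strong star-shapedness makes `g`
continuous, with `X = {g ≤ 1}` and `interior X = {g < 1}`. Interior points have Euclidean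
neighbourhoods. Near a boundary point `z` we have `g z = 1`; choose a linear functional `ℓ` with
`ℓ z > 0`. The radial map `y ↦ (g y / ℓ y) • y` is a homeomorphism of the open cone
`{ℓ > 0, g > 0}` onto itself with `ℓ ∘ (this map) = g`, so it carries `X` onto the half-space
`{ℓ ≤ 1}` there; a linear isomorphism onto `ℝⁿ` whose first coordinate is `ℓ` finishes the chart.
-/

open Set Filter Topology Module
open scoped Manifold

section StarShaped

variable {E : Type*} [NormedAddCommGroup E] [NormedSpace ℝ E]

def StronglyStarShaped (x₀ : E) (X : Set E) : Prop :=
  ∀ x ∈ X, ∀ t ∈ Ico (0 : ℝ) 1, x₀ + t • (x - x₀) ∈ interior X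

variable {X : Set E}

theorem StronglyStarShaped.image_subRight {x₀ : E} (hX : StronglyStarShaped x₀ X) :
    StronglyStarShaped 0 (Homeomorph.subRight x₀ '' X) := by
  rintro _ ⟨x, hx, rfl⟩ t ht
  rw [← Homeomorph.image_interior]
  exact ⟨_, hX x hx t ht, by simp⟩

namespace StronglyStarShaped

variable (hX : StronglyStarShaped 0 X)
include hX

theorem smul_mem_interior {x : E} (hx : x ∈ X) {t : ℝ} (ht₀ : 0 ≤ t) (ht₁ : t < 1) :
    t • x ∈ interior X := by
  simpa using hX x hx t ⟨ht₀, ht₁⟩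

theorem zero_mem_interior {x : E} (hx : x ∈ X) : (0 : E) ∈ interior X := by
  simpa using hX.smul_mem_interior hx le_rfl one_pos

variable (h0 : (0 : E) ∈ interior X)
include h0

theorem gauge_lt_one_iff {y : E} : gauge X y < 1 ↔ y ∈ interior X := by
  refine ⟨fun hy => ?_, fun hy => interior_subset_gauge_lt_one X hy⟩
  obtain ⟨b, hb₀, hb₁, x, hx, rfl⟩ :=
    exists_lt_of_gauge_lt (absorbent_nhds_zero (mem_interior_iff_mem_nhds.1 h0)) hy
  exact hX.smul_mem_interior hx hb₀.le hb₁

theorem gauge_le_one_iff (hcl : IsClosed X) {y : E} : gauge X y ≤ 1 ↔ y ∈ X := by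
  refine ⟨fun hy => ?_, gauge_le_one_of_mem⟩
  have hlim : Tendsto (fun t : ℝ => t • y) (𝓝[<] 1) (𝓝 y) := by
    have : Continuous fun t : ℝ => t • y := continuous_id.smul continuous_const
    simpa using (this.tendsto 1).mono_left nhdsWithin_le_nhds
  refine hcl.mem_of_tendsto hlim ?_
  filter_upwards [Ioo_mem_nhdsLT one_pos] with t ht
  refine interior_subset ((hX.gauge_lt_one_iff h0).1 ?_)
  rw [gauge_smul_of_nonneg ht.1.le, smul_eq_mul]
  exact mul_lt_one_of_nonneg_of_lt_one_left ht.1.le ht.2 hy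

theorem gauge_le_iff (hcl : IsClosed X) {c : ℝ} (hc : 0 < c) {y : E} :
    gauge X y ≤ c ↔ c⁻¹ • y ∈ X := by
  rw [← hX.gauge_le_one_iff h0 hcl, gauge_smul_of_nonneg (inv_nonneg.2 hc.le), smul_eq_mul,
    inv_mul_le_one₀ hc]

theorem gauge_lt_iff {c : ℝ} (hc : 0 < c) {y : E} : gauge X y < c ↔ c⁻¹ • y ∈ interior X := by
  rw [← hX.gauge_lt_one_iff h0, gauge_smul_of_nonneg (inv_nonneg.2 hc.le), smul_eq_mul,
    inv_mul_lt_one₀ hc]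

theorem continuous_gauge (hcl : IsClosed X) : Continuous (gauge X) := by
  refine continuous_iff_continuousAt.2 fun y => tendsto_order.2 ⟨fun a ha => ?_, fun b hb => ?_⟩
  · rcases lt_or_ge a 0 with ha₀ | ha₀
    · exact .of_forall fun w => ha₀.trans_le (gauge_nonneg w)
    obtain ⟨c, hac, hcy⟩ := exists_between ha
    have hc := ha₀.trans_lt hac
    have hopen : IsOpen {w : E | c⁻¹ • w ∉ X} :=
      hcl.isOpen_compl.preimage (continuous_const_smul _)
    have hy : c⁻¹ • y ∉ X := by rwa [← hX.gauge_le_iff h0 hcl hc, not_le]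
    filter_upwards [hopen.mem_nhds hy] with w hw
    rw [← hX.gauge_le_iff h0 hcl hc, not_le] at hw
    exact hac.trans hw
  · have hb₀ := (gauge_nonneg y).trans_lt hb
    have hopen : IsOpen {w : E | b⁻¹ • w ∈ interior X} :=
      isOpen_interior.preimage (continuous_const_smul _)
    filter_upwards [hopen.mem_nhds ((hX.gauge_lt_iff h0 hb₀).1 hb)] with w hw
    exact (hX.gauge_lt_iff h0 hb₀).2 hw

end StronglyStarShaped

end StarShaped

section RadialStraightening

variable {E : Type*} [NormedAddCommGroup E] [NormedSpace ℝ E] (g : E → ℝ) (hg : Continuous g)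
  (hhom : ∀ c : ℝ, 0 < c → ∀ y, g (c • y) = c * g y) (ℓ : E →L[ℝ] ℝ)

noncomputable def radialStraightening : OpenPartialHomeomorph E E where
  toFun y := (g y / ℓ y) • y
  invFun v := (ℓ v / g v) • v
  source := {y | 0 < ℓ y ∧ 0 < g y}
  target := {y | 0 < ℓ y ∧ 0 < g y}
  map_source' := by
    rintro y ⟨hℓy, hgy⟩
    have hc : 0 < g y / ℓ y := div_pos hgy hℓy
    simp only [mem_ofPred_eq, map_smul, smul_eq_mul, hhom _ hc]
    constructor <;> positivity
  map_target' := by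
    rintro y ⟨hℓy, hgy⟩
    have hc : 0 < ℓ y / g y := div_pos hℓy hgy
    simp only [mem_ofPred_eq, map_smul, smul_eq_mul, hhom _ hc]
    constructor <;> positivity
  left_inv' := by
    rintro y ⟨hℓy, hgy⟩
    simp only [map_smul, smul_eq_mul, hhom _ (div_pos hgy hℓy), smul_smul]
    match_scalars
    field_simp
  right_inv' := by
    rintro y ⟨hℓy, hgy⟩
    simp only [map_smul, smul_eq_mul, hhom _ (div_pos hℓy hgy), smul_smul]
    match_scalars
    field_simp
  open_source := (isOpen_lt continuous_const ℓ.continuous).inter (isOpen_lt continuous_const hg)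
  open_target := (isOpen_lt continuous_const ℓ.continuous).inter (isOpen_lt continuous_const hg)
  continuousOn_toFun :=
    (hg.continuousOn.div ℓ.continuous.continuousOn fun _ hy => hy.1.ne').smul continuousOn_id
  continuousOn_invFun :=
    (ℓ.continuous.continuousOn.div hg.continuousOn fun _ hy => hy.2.ne').smul continuousOn_id

theorem radialStraightening_apply (y : E) :
    radialStraightening g hg hhom ℓ y = (g y / ℓ y) • y :=
  rfl

variable {g hg hhom ℓ} in
theorem map_radialStraightening {y : E}
    (hy : y ∈ (radialStraightening g hg hhom ℓ).source) :
    ℓ (radialStraightening g hg hhom ℓ y) = g y := by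
  rw [radialStraightening_apply, map_smul, smul_eq_mul, div_mul_cancel₀ _ hy.1.ne']

end RadialStraightening

namespace OpenPartialHomeomorph

variable {V : Type*} [TopologicalSpace V] {n : ℕ} [NeZero n]

def Straightens (e : OpenPartialHomeomorph V (EuclideanSpace ℝ (Fin n))) (X : Set V) : Prop :=
  ∀ y ∈ e.source, y ∈ X ↔ 0 ≤ e y 0

variable {e : OpenPartialHomeomorph V (EuclideanSpace ℝ (Fin n))} {X : Set V}

theorem Straightens.modelWithCorners_symm_apply (he : e.Straightens X) {y : V} (hy : y ∈ e.source)
    (hyX : y ∈ X) : (𝓡∂ n) ((𝓡∂ n).symm (e y)) = e y :=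
  (𝓡∂ n).right_inv <| by
    rw [range_modelWithCornersEuclideanHalfSpace]
    exact (he y hy).1 hyX

theorem Straightens.symm_mem (he : e.Straightens X) {p : EuclideanHalfSpace n}
    (hp : (𝓡∂ n) p ∈ e.target) : e.symm ((𝓡∂ n) p) ∈ X := by
  rw [he _ (e.map_target hp), e.right_inv hp]
  exact p.2

theorem Straightens.homeomorph_trans {W : Type*} [TopologicalSpace W] (h : W ≃ₜ V)
    (he : e.Straightens X) : (h.toOpenPartialHomeomorph.trans e).Straightens (h ⁻¹' X) := by
  intro y hy
  rw [trans_source, Homeomorph.toOpenPartialHomeomorph_source, univ_inter] at hy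
  exact he (h y) hy

/-- Outside the target, the inverse takes the junk value `x`. -/
noncomputable def restrHalfSpace (e : OpenPartialHomeomorph V (EuclideanSpace ℝ (Fin n)))
    (X : Set V) (he : e.Straightens X) (x : X) : OpenPartialHomeomorph X (EuclideanHalfSpace n) :=
  open Classical in
  { toFun y := (𝓡∂ n).symm (e y)
    invFun p := if h : e.symm ((𝓡∂ n) p) ∈ X then ⟨_, h⟩ else x
    source := Subtype.val ⁻¹' e.source
    target := (𝓡∂ n) ⁻¹' e.target
    map_source' y hy := by
      rw [mem_preimage, he.modelWithCorners_symm_apply hy y.2]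
      exact e.map_source hy
    map_target' p hp := by
      rw [mem_preimage, dif_pos (he.symm_mem hp)]
      exact e.map_target hp
    left_inv' y hy := by
      have hey := he.modelWithCorners_symm_apply hy y.2
      have hmem : (𝓡∂ n) ((𝓡∂ n).symm (e y)) ∈ e.target := by
        rw [hey]
        exact e.map_source hy
      rw [dif_pos (he.symm_mem hmem)]
      exact Subtype.ext (by simp only [hey, e.left_inv hy])
    right_inv' p hp := by
      rw [dif_pos (he.symm_mem hp)]
      simp only [e.right_inv hp, (𝓡∂ n).left_inv]
    open_source := e.open_source.preimage continuous_subtype_val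
    open_target := e.open_target.preimage (𝓡∂ n).continuous
    continuousOn_toFun := (𝓡∂ n).continuous_symm.comp_continuousOn
      (e.continuousOn.comp continuous_subtype_val.continuousOn fun _ hy => hy)
    continuousOn_invFun := by
      refine Topology.IsInducing.subtypeVal.continuousOn_iff.2 ?_
      refine (e.continuousOn_symm.comp (𝓡∂ n).continuous.continuousOn fun _ hp => hp).congr
        fun p hp => ?_
      simp only [Function.comp_apply, dif_pos (he.symm_mem hp)] }

end OpenPartialHomeomorph

open OpenPartialHomeomorph

theorem nonempty_chartedSpace_of_forall_exists_straightens {V : Type*} [TopologicalSpace V]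
    {n : ℕ} [NeZero n] (X : Set V)
    (h : ∀ x ∈ X, ∃ e : OpenPartialHomeomorph V (EuclideanSpace ℝ (Fin n)),
      x ∈ e.source ∧ e.Straightens X) :
    Nonempty (ChartedSpace (EuclideanHalfSpace n) X) := by
  choose e hxe he using h
  let chart (x : X) := (e x x.2).restrHalfSpace X (he x x.2) x
  exact ⟨{ atlas := range chart
           chartAt := chart
           mem_chart_source x := hxe x x.2
           chart_mem_atlas x := mem_range_self x }⟩

theorem exists_straightens_of_mem_interior {V : Type*} [TopologicalSpace V] {n : ℕ} [NeZero n]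
    (A : V ≃ₜ EuclideanSpace ℝ (Fin n)) {X : Set V} {x : V} (hx : x ∈ interior X) :
    ∃ e : OpenPartialHomeomorph V (EuclideanSpace ℝ (Fin n)),
      x ∈ e.source ∧ e.Straightens X := by
  let B := A.trans (Homeomorph.addRight (EuclideanSpace.single 0 1 - A x))
  have hB : ∀ y, B y 0 = A y 0 - A x 0 + 1 := fun y => by simp [B]; ring
  have hopen : IsOpen (interior X ∩ {y | 0 < B y 0}) :=
    isOpen_interior.inter (isOpen_lt continuous_const
      ((EuclideanSpace.proj (0 : Fin n)).continuous.comp B.continuous))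
  refine ⟨B.toOpenPartialHomeomorph.restrOpen _ hopen, ⟨trivial, hx, by simp [hB]⟩, ?_⟩
  rintro y ⟨-, hyX, hy⟩
  exact iff_of_true (interior_subset hyX) hy.le

section FiniteDimensional

variable {V : Type*} [NormedAddCommGroup V] [NormedSpace ℝ V] [FiniteDimensional ℝ V]
  [NeZero (finrank ℝ V)]

theorem exists_continuousLinearEquiv_apply_zero_pos {z : V} (hz : z ≠ 0) :
    ∃ L : V ≃L[ℝ] EuclideanSpace ℝ (Fin (finrank ℝ V)), 0 < L z 0 := by
  set w := toEuclidean z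
  set v : EuclideanSpace ℝ (Fin (finrank ℝ V)) := EuclideanSpace.single 0 ‖w‖
  have hvw : ‖w‖ = ‖v‖ := by simp [v]
  refine ⟨toEuclidean.trans (Submodule.reflection (ℝ ∙ (w - v))ᗮ).toContinuousLinearEquiv, ?_⟩
  have : Submodule.reflection (ℝ ∙ (w - v))ᗮ w = v := Submodule.reflection_sub hvw
  simp [this, v, w, hz]

theorem exists_straightens_setOf_le_one {g : V → ℝ} (hg : Continuous g)
    (hhom : ∀ c : ℝ, 0 < c → ∀ y, g (c • y) = c * g y) {z : V} (hz : g z = 1) :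
    ∃ e : OpenPartialHomeomorph V (EuclideanSpace ℝ (Fin (finrank ℝ V))),
      z ∈ e.source ∧ e.Straightens {y | g y ≤ 1} := by
  have hz₀ : z ≠ 0 := by
    rintro rfl
    have := hhom 2 two_pos 0
    rw [smul_zero, hz] at this
    norm_num at this
  obtain ⟨L, hLz⟩ := exists_continuousLinearEquiv_apply_zero_pos hz₀
  let ℓ : V →L[ℝ] ℝ := (EuclideanSpace.proj (0 : Fin (finrank ℝ V))).comp (L : V →L[ℝ] _)
  let e := (radialStraightening g hg hhom ℓ).trans
    (L.toHomeomorph.trans (Homeomorph.subLeft (EuclideanSpace.single 0 1))).toOpenPartialHomeomorph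
  have he : ∀ y ∈ e.source, e y 0 = 1 - g y := by
    intro y hy
    have hy' : y ∈ (radialStraightening g hg hhom ℓ).source := hy.1
    rw [← map_radialStraightening hy']
    simp [e, ℓ]
  refine ⟨e, ?_, fun y hy => ?_⟩
  · simp [e, radialStraightening, ℓ, hLz, hz]
  · rw [mem_ofPred_eq, he y hy, sub_nonneg]

theorem StronglyStarShaped.exists_straightens {X : Set V} (hX : StronglyStarShaped 0 X)
    (hcl : IsClosed X) {z : V} (hz : z ∈ X) :
    ∃ e : OpenPartialHomeomorph V (EuclideanSpace ℝ (Fin (finrank ℝ V))),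
      z ∈ e.source ∧ e.Straightens X := by
  by_cases hzi : z ∈ interior X
  · exact exists_straightens_of_mem_interior toEuclidean.toHomeomorph hzi
  have h0 := hX.zero_mem_interior hz
  have hgz : gauge X z = 1 :=
    le_antisymm (gauge_le_one_of_mem hz) (not_lt.1 (mt (hX.gauge_lt_one_iff h0).1 hzi))
  obtain ⟨e, hze, he⟩ := exists_straightens_setOf_le_one (hX.continuous_gauge h0 hcl)
    (fun c hc y => by rw [gauge_smul_of_nonneg hc.le, smul_eq_mul]) hgz
  have hXeq : {y | gauge X y ≤ 1} = X := ext fun y => hX.gauge_le_one_iff h0 hcl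
  exact ⟨e, hze, hXeq ▸ he⟩

end FiniteDimensional

theorem stmt9_general {V : Type*} [NormedAddCommGroup V] [NormedSpace ℝ V] [FiniteDimensional ℝ V]
    [NeZero (Module.finrank ℝ V)]
    (X : Set V) (x0 : V) (hX : IsClosed X)
    (hss : ∀ x ∈ X, ∀ t ∈ Set.Ico (0:ℝ) 1, x0 + t • (x - x0) ∈ interior X) :
    Nonempty (ChartedSpace (EuclideanHalfSpace (Module.finrank ℝ V)) ↥X) := by
  have hstar : StronglyStarShaped x0 X := hss
  let τ := Homeomorph.subRight x0
  refine nonempty_chartedSpace_of_forall_exists_straightens X fun x hx => ?_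
  obtain ⟨e, hxe, he⟩ :=
    hstar.image_subRight.exists_straightens (τ.isClosed_image.2 hX) (mem_image_of_mem τ hx)
  refine ⟨τ.toOpenPartialHomeomorph.trans e, ⟨trivial, hxe⟩, ?_⟩
  rw [← τ.preimage_image X]
  exact he.homeomorph_trans τ

theorem stmt9 {V : Type*} [NormedAddCommGroup V] [NormedSpace ℝ V] [FiniteDimensional ℝ V]
    [NeZero (Module.finrank ℝ V)]
    (X : Set V) (x0 : V) (hx0 : x0 ∈ X) (hX : IsClosed X)
    (hss : ∀ x ∈ X, ∀ t ∈ Set.Ico (0:ℝ) 1, x0 + t • (x - x0) ∈ interior X) :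
    Nonempty (ChartedSpace (EuclideanHalfSpace (Module.finrank ℝ V)) ↥X) :=
  stmt9_general X x0 hX hss
end

section
/- Let V be a finite-dimensional real vector space contained in a finite-dimensional real vector space U, let π_i : U → U_i be linear maps to finite-dimensional real vector spaces, V_i ⊆ U_i linear subspaces with V = ∩_{i=1}^n π_i^{-1}(V_i), and X_i ⊆ V_i subsets with X = ∩_{i=1}^n π_i^{-1}(X_i). If x_* ∈ V is such that (π_i(x_*), X_i, V_i) is strongly star-shaped for all i, then (x_*, X, V) is strongly star-shaped. -/
/-- `(x0, X, V)` is strongly star-shaped: `x0 ∈ X`, `X` is closed, and for every `x ∈ X` and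
`t ∈ [0,1)` the point `x0 + t • (x - x0)` lies in the interior of `X` relative to `V`. -/
def StronglyStarShapedIn {E : Type*} [NormedAddCommGroup E] [NormedSpace ℝ E]
    (x0 : E) (X V : Set E) : Prop :=
  x0 ∈ X ∧ IsClosed X ∧ ∀ x ∈ X, ∀ t : ℝ, 0 ≤ t → t < 1 →
    ∃ ε > 0, ∀ y ∈ V, ‖y - (x0 + t • (x - x0))‖ < ε → y ∈ X

theorem stmt10 {ι : Type*} [Fintype ι]
    {U : Type*} [NormedAddCommGroup U] [NormedSpace ℝ U] [FiniteDimensional ℝ U]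
    (Ui : ι → Type*) [∀ i, NormedAddCommGroup (Ui i)] [∀ i, NormedSpace ℝ (Ui i)]
    [∀ i, FiniteDimensional ℝ (Ui i)]
    (π : ∀ i, U →ₗ[ℝ] Ui i) (Vi : ∀ i, Submodule ℝ (Ui i)) (V : Submodule ℝ U)
    (hV : (V : Set U) = ⋂ i, (π i) ⁻¹' (Vi i : Set (Ui i)))
    (Xi : ∀ i, Set (Ui i)) (hXi : ∀ i, Xi i ⊆ (Vi i : Set (Ui i)))
    (X : Set U) (hX : X = ⋂ i, (π i) ⁻¹' (Xi i))
    (x0 : U) (hx0 : x0 ∈ V)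
    (hssi : ∀ i, StronglyStarShapedIn (π i x0) (Xi i) (Vi i : Set (Ui i))) :
    StronglyStarShapedIn x0 X (V : Set U) := by
  have hVmem : ∀ y ∈ V, ∀ i, π i y ∈ Vi i := by
    intro y hy i
    have : y ∈ ⋂ i, (π i) ⁻¹' (Vi i : Set (Ui i)) := hV ▸ hy
    exact Set.mem_iInter.1 this i
  refine ⟨?_, ?_, ?_⟩
  · rw [hX]; exact Set.mem_iInter.2 fun i => (hssi i).1
  · rw [hX]
    exact isClosed_iInter fun i =>
      (hssi i).2.1.preimage (π i).continuous_of_finiteDimensional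
  · intro x hx t ht0 ht1
    rw [hX] at hx
    choose ε hε hball using fun i =>
      (hssi i).2.2 (π i x) (Set.mem_iInter.1 hx i) t ht0 ht1
    set L := fun i => LinearMap.toContinuousLinearMap (π i) with hL
    cases isEmpty_or_nonempty ι with
    | inl h =>
      refine ⟨1, one_pos, fun y _ _ => ?_⟩
      rw [hX]
      exact Set.mem_iInter.2 fun i => (h.false i).elim
    | inr h =>
      have hun : (Finset.univ : Finset ι).Nonempty := Finset.univ_nonempty
      set δ := Finset.univ.inf' hun (fun i => ε i / (‖L i‖ + 1)) with hδ
      have hpos : ∀ i, 0 < ε i / (‖L i‖ + 1) := fun i =>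
        div_pos (hε i) (by positivity)
      have hδpos : 0 < δ := by
        rw [hδ, Finset.lt_inf'_iff]
        exact fun i _ => hpos i
      refine ⟨δ, hδpos, fun y hy hnear => ?_⟩
      rw [hX]
      refine Set.mem_iInter.2 fun i => ?_
      have hδle : δ ≤ ε i / (‖L i‖ + 1) :=
        Finset.inf'_le _ (Finset.mem_univ i)
      have key : ‖π i y - (π i x0 + t • (π i x - π i x0))‖ < ε i := by
        have heq : π i y - (π i x0 + t • (π i x - π i x0))
            = L i (y - (x0 + t • (x - x0))) := by
          simp [hL, map_add, map_sub, map_smul]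
        rw [heq]
        calc ‖L i (y - (x0 + t • (x - x0)))‖
            ≤ ‖L i‖ * ‖y - (x0 + t • (x - x0))‖ := (L i).le_opNorm _
          _ ≤ ‖L i‖ * δ := by
              exact mul_le_mul_of_nonneg_left hnear.le (norm_nonneg _)
          _ < (‖L i‖ + 1) * δ := by
              apply mul_lt_mul_of_pos_right _ hδpos
              linarith
          _ ≤ (‖L i‖ + 1) * (ε i / (‖L i‖ + 1)) := by
              apply mul_le_mul_of_nonneg_left hδle (by positivity)
          _ = ε i := by field_simp
      exact hball i (π i y) (hVmem y hy i) key
end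

section
/- Let A be a symmetric n×n real matrix with nonnegative entries having exactly one positive eigenvalue (counted with multiplicity), and let d_1, ..., d_n be real numbers with 0 ≤ d_i ≤ A_{ii} for all i. Then the matrix A' = A − Diag(d_1, ..., d_n) is either the zero matrix or has exactly one positive eigenvalue. -/
/-!
Subtracting the positive semidefinite `diagonal d` can only lower the number of positive
eigenvalues: if `N ≤ M` in the Loewner order, the span of the eigenvectors of `N` with positive
eigenvalues meets the span of the eigenvectors of `M` with nonpositive eigenvalues only in `0`,
so its dimension is at most the number of positive eigenvalues of `M`. Conversely,
`A - diagonal d` has nonnegative entries, so unless it vanishes its quadratic form is positive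
at the all-ones vector, which forces a positive eigenvalue.
-/

open Matrix Finset

theorem Submodule.exists_ne_zero_mem_inf_of_finrank_lt {K V : Type*} [DivisionRing K]
    [AddCommGroup V] [Module K V] [FiniteDimensional K V] (W₁ W₂ : Submodule K V)
    (h : Module.finrank K V < Module.finrank K W₁ + Module.finrank K W₂) :
    ∃ x ∈ W₁ ⊓ W₂, x ≠ 0 := by
  have hsum := Submodule.finrank_sup_add_finrank_inf_eq W₁ W₂
  have hsup := Submodule.finrank_le (W₁ ⊔ W₂)
  exact Submodule.exists_mem_ne_zero_of_ne_bot fun hbot => by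
    rw [hbot, finrank_bot] at hsum
    omega

theorem Matrix.one_dotProduct_mulVec_one_pos {ι R : Type*} [Fintype ι] [Semiring R]
    [PartialOrder R] [IsOrderedCancelAddMonoid R] {B : Matrix ι ι R}
    (hB : ∀ i j, 0 ≤ B i j) (h0 : B ≠ 0) : 0 < 1 ⬝ᵥ (B *ᵥ 1) := by
  obtain ⟨i, j, hij⟩ : ∃ i j, B i j ≠ 0 := by
    by_contra! h
    exact h0 (Matrix.ext h)
  simp only [one_dotProduct, mulVec, dotProduct_one]
  exact sum_pos' (fun i _ => sum_nonneg fun j _ => hB i j)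
    ⟨i, mem_univ i, sum_pos' (fun j _ => hB i j) ⟨j, mem_univ j, (hB i j).lt_of_ne' hij⟩⟩

namespace Matrix.IsHermitian

variable {ι : Type*} [Fintype ι] [DecidableEq ι] {M N : Matrix ι ι ℝ}

lemma dotProduct_mulVec_eq_sum_eigenvalues (hM : M.IsHermitian) (x : ι → ℝ) :
    x ⬝ᵥ (M *ᵥ x) =
      ∑ i, hM.eigenvalues i * ((star (hM.eigenvectorUnitary : Matrix ι ι ℝ) *ᵥ x) i) ^ 2 := by
  have hUt : (hM.eigenvectorUnitary : Matrix ι ι ℝ)ᵀ =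
      star (hM.eigenvectorUnitary : Matrix ι ι ℝ) :=
    (conjTranspose_eq_transpose_of_trivial _).symm
  conv_lhs => rw [hM.spectral_theorem, Unitary.conjStarAlgAut_apply]
  rw [← mulVec_mulVec, ← mulVec_mulVec, dotProduct_mulVec x, ← mulVec_transpose, hUt]
  simp [dotProduct, mulVec_diagonal, sq, mul_left_comm]

/-- The span of the eigenvectors of `M` indexed by `s`, encoded as the vectors whose coordinates
in the eigenbasis vanish outside `s`. -/
noncomputable def eigenbasisSupported (hM : M.IsHermitian) (s : Finset ι) :
    Submodule ℝ (ι → ℝ) :=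
  LinearMap.ker (LinearMap.funLeft ℝ ℝ ((↑) : (sᶜ : Finset ι) → ι) ∘ₗ
    (star (hM.eigenvectorUnitary : Matrix ι ι ℝ)).mulVecLin)

lemma mem_eigenbasisSupported (hM : M.IsHermitian) {s : Finset ι} {x : ι → ℝ} :
    x ∈ hM.eigenbasisSupported s ↔
      ∀ i ∉ s, (star (hM.eigenvectorUnitary : Matrix ι ι ℝ) *ᵥ x) i = 0 := by
  simp [eigenbasisSupported, funext_iff, LinearMap.funLeft]

lemma card_le_finrank_eigenbasisSupported (hM : M.IsHermitian) (s : Finset ι) :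
    #s ≤ Module.finrank ℝ (hM.eigenbasisSupported s) := by
  set f := LinearMap.funLeft ℝ ℝ ((↑) : (sᶜ : Finset ι) → ι) ∘ₗ
    (star (hM.eigenvectorUnitary : Matrix ι ι ℝ)).mulVecLin
  change #s ≤ Module.finrank ℝ (LinearMap.ker f)
  have hrange := Submodule.finrank_le (LinearMap.range f)
  have hsum := f.finrank_range_add_finrank_ker
  simp only [Module.finrank_fintype_fun_eq_card, Fintype.card_coe, card_compl] at hrange hsum
  have := card_le_univ s
  omega

lemma dotProduct_mulVec_nonpos_of_mem_eigenbasisSupported (hM : M.IsHermitian) {x : ι → ℝ}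
    (hx : x ∈ hM.eigenbasisSupported {i | ¬ 0 < hM.eigenvalues i}) :
    x ⬝ᵥ (M *ᵥ x) ≤ 0 := by
  rw [hM.dotProduct_mulVec_eq_sum_eigenvalues]
  refine sum_nonpos fun i _ => ?_
  by_cases hi : 0 < hM.eigenvalues i
  · simp [hM.mem_eigenbasisSupported.mp hx i (by simpa using hi)]
  · exact mul_nonpos_of_nonpos_of_nonneg (not_lt.mp hi) (sq_nonneg _)

lemma dotProduct_mulVec_pos_of_mem_eigenbasisSupported (hM : M.IsHermitian) {x : ι → ℝ}
    (hx : x ∈ hM.eigenbasisSupported {i | 0 < hM.eigenvalues i}) (hx0 : x ≠ 0) :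
    0 < x ⬝ᵥ (M *ᵥ x) := by
  set U : Matrix ι ι ℝ := (hM.eigenvectorUnitary : Matrix ι ι ℝ)
  have hsupp := hM.mem_eigenbasisSupported.mp hx
  -- `U` is invertible, so `x ≠ 0` has a nonzero eigen-coordinate
  obtain ⟨k, hk⟩ : ∃ k, (star U *ᵥ x) k ≠ 0 := by
    by_contra! h
    apply hx0
    rw [← one_mulVec x, ← Unitary.coe_mul_star_self hM.eigenvectorUnitary, ← mulVec_mulVec,
      Unitary.coe_star, show star U *ᵥ x = 0 from funext h, mulVec_zero]
  have hkpos : 0 < hM.eigenvalues k := by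
    by_contra hk'
    exact hk (hsupp k (by simpa using hk'))
  rw [hM.dotProduct_mulVec_eq_sum_eigenvalues]
  refine sum_pos' (fun i _ => ?_) ⟨k, mem_univ k, by positivity⟩
  by_cases hi : 0 < hM.eigenvalues i
  · positivity
  · simp [hsupp i (by simpa using hi)]

theorem card_pos_eigenvalues_le_of_posSemidef_sub (hM : M.IsHermitian) (hN : N.IsHermitian)
    (hMN : (M - N).PosSemidef) :
    #{i | 0 < hN.eigenvalues i} ≤ #{i | 0 < hM.eigenvalues i} := by
  by_contra! hlt
  have hcard := card_filter_add_card_filter_not (s := univ) (fun i => 0 < hM.eigenvalues i)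
  obtain ⟨x, hx, hx0⟩ := Submodule.exists_ne_zero_mem_inf_of_finrank_lt
    (hM.eigenbasisSupported {i | ¬ 0 < hM.eigenvalues i})
    (hN.eigenbasisSupported {i | 0 < hN.eigenvalues i}) (by
      have := hM.card_le_finrank_eigenbasisSupported {i | ¬ 0 < hM.eigenvalues i}
      have := hN.card_le_finrank_eigenbasisSupported {i | 0 < hN.eigenvalues i}
      simp only [Module.finrank_fintype_fun_eq_card, card_univ] at hcard ⊢
      omega)
  have hle := hMN.dotProduct_mulVec_nonneg x
  rw [star_trivial, sub_mulVec, dotProduct_sub, sub_nonneg] at hle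
  have hMx := hM.dotProduct_mulVec_nonpos_of_mem_eigenbasisSupported (Submodule.mem_inf.mp hx).1
  have hNx := hN.dotProduct_mulVec_pos_of_mem_eigenbasisSupported (Submodule.mem_inf.mp hx).2 hx0
  linarith

theorem exists_eigenvalues_pos_of_dotProduct_mulVec_pos (hM : M.IsHermitian) {x : ι → ℝ}
    (hx : 0 < x ⬝ᵥ (M *ᵥ x)) : ∃ i, 0 < hM.eigenvalues i := by
  rw [hM.dotProduct_mulVec_eq_sum_eigenvalues] at hx
  obtain ⟨i, -, hi⟩ := exists_lt_of_sum_lt (sum_const_zero.trans_lt hx)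
  exact ⟨i, pos_of_mul_pos_left hi (sq_nonneg _)⟩

end Matrix.IsHermitian

theorem stmt12 (n : ℕ) (A : Matrix (Fin n) (Fin n) ℝ) (hA : A.IsHermitian)
    (hpos : ∀ i j, 0 ≤ A i j)
    (hone : (Finset.univ.filter (fun i => 0 < hA.eigenvalues i)).card = 1)
    (d : Fin n → ℝ) (hd : ∀ i, 0 ≤ d i ∧ d i ≤ A i i)
    (hA' : (A - Matrix.diagonal d).IsHermitian) :
    A - Matrix.diagonal d = 0 ∨
      (Finset.univ.filter (fun i => 0 < hA'.eigenvalues i)).card = 1 := by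
  refine or_iff_not_imp_left.mpr fun h0 => le_antisymm ?_ ?_
  · have hsub : (A - (A - diagonal d)).PosSemidef := by
      rw [sub_sub_cancel]
      exact PosSemidef.diagonal fun i => (hd i).1
    exact hone ▸ hA.card_pos_eigenvalues_le_of_posSemidef_sub hA' hsub
  · have hnonneg : ∀ i j, 0 ≤ (A - diagonal d) i j := by
      intro i j
      rcases eq_or_ne i j with rfl | hij
      · simpa using (hd i).2
      · simpa [hij] using hpos i j
    obtain ⟨i, hi⟩ := hA'.exists_eigenvalues_pos_of_dotProduct_mulVec_pos
      (one_dotProduct_mulVec_one_pos hnonneg h0)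
    exact card_pos.mpr ⟨i, by simpa using hi⟩
end

section
/- Let f = x_1² − x_2² − ... − x_r² (r ≥ 1). There exist Hermitian 2×2 complex matrices A_1, ..., A_r with f = det(x_1 A_1 + ... + x_r A_r) if and only if r ≤ 4; and there exist real symmetric 2×2 matrices with this property if and only if r ≤ 3. -/
lemma exists_ker14 {r n : ℕ} (hn : n < r) (c : Fin n → Fin r → ℝ) :
    ∃ l : Fin r → ℝ, l ≠ 0 ∧ ∀ j, ∑ i, l i * c j i = 0 := by
  set L : (Fin r → ℝ) →ₗ[ℝ] (Fin n → ℝ) := LinearMap.pi fun j =>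
    { toFun := fun x => ∑ i, x i * c j i
      map_add' := fun x y => by simp [add_mul, Finset.sum_add_distrib]
      map_smul' := fun t x => by simp [Finset.mul_sum, mul_assoc] } with hL
  have hni : ¬ Function.Injective L := by
    intro hinj
    have h1 := LinearMap.finrank_le_finrank_of_injective hinj
    simp [Module.finrank_fin_fun] at h1
    omega
  rw [Function.not_injective_iff] at hni
  obtain ⟨a, b, hab, hne⟩ := hni
  refine ⟨a - b, sub_ne_zero.mpr hne, fun j => ?_⟩
  have h0 : L (a - b) = 0 := by rw [map_sub, hab, sub_self]
  have := congrFun h0 j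
  simpa [hL, LinearMap.pi_apply, sub_mul, Finset.sum_sub_distrib] using this

-- extract l j = 0 from the two determinant evaluations
lemma lam_zero14 {r : ℕ} (hr : 0 < r) (l : Fin r → ℝ) (j : Fin r)
    (E : ((l ⟨0, hr⟩ + if (⟨0, hr⟩ : Fin r) = j then 1 else 0) ^ 2 -
          ∑ i ∈ Finset.univ.erase ⟨0, hr⟩, (l i + if i = j then 1 else 0) ^ 2) =
         ((l ⟨0, hr⟩ - if (⟨0, hr⟩ : Fin r) = j then 1 else 0) ^ 2 -
          ∑ i ∈ Finset.univ.erase ⟨0, hr⟩, (l i - if i = j then 1 else 0) ^ 2)) :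
    l j = 0 := by
  have hsplit : ∑ i ∈ Finset.univ.erase (⟨0, hr⟩ : Fin r),
      ((l i + if i = j then 1 else 0) ^ 2 - (l i - if i = j then 1 else 0) ^ 2)
      = if j ∈ Finset.univ.erase (⟨0, hr⟩ : Fin r) then 4 * l j else 0 := by
    rw [Finset.sum_congr rfl (g := fun i => if i = j then 4 * l i else 0)
      (fun i _ => by by_cases hij : i = j <;> simp [hij] <;> ring)]
    rw [Finset.sum_ite_eq' (Finset.univ.erase (⟨0, hr⟩ : Fin r)) j (fun i => 4 * l i)]
  rw [Finset.sum_sub_distrib] at hsplit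
  by_cases hj : (⟨0, hr⟩ : Fin r) = j
  · simp [hj.symm] at hsplit
    rw [← hj] at E ⊢
    simp at E
    nlinarith [E, hsplit]
  · have hjmem : j ∈ Finset.univ.erase (⟨0, hr⟩ : Fin r) := by
      simp [Finset.mem_erase]; exact fun h => hj h.symm
    simp [hjmem, hj] at hsplit E
    nlinarith [E, hsplit]

theorem stmt14 (r : ℕ) (hr : 0 < r) :
    ((∃ A : Fin r → Matrix (Fin 2) (Fin 2) ℂ, (∀ i, (A i).IsHermitian) ∧
        ∀ x : Fin r → ℝ,
          Matrix.det (∑ i, x i • A i) =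
            (((x ⟨0, hr⟩) ^ 2 - ∑ i ∈ Finset.univ.erase ⟨0, hr⟩, (x i) ^ 2 : ℝ) : ℂ)) ↔
      r ≤ 4) ∧
    ((∃ A : Fin r → Matrix (Fin 2) (Fin 2) ℝ, (∀ i, (A i).IsSymm) ∧
        ∀ x : Fin r → ℝ,
          Matrix.det (∑ i, x i • A i) =
            (x ⟨0, hr⟩) ^ 2 - ∑ i ∈ Finset.univ.erase ⟨0, hr⟩, (x i) ^ 2) ↔
      r ≤ 3) := by
  constructor
  · constructor
    · rintro ⟨A, hA, h⟩
      by_contra hlt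
      push_neg at hlt
      obtain ⟨l, hlne, hker⟩ := exists_ker14 hlt
        ![fun i => (A i 0 0).re, fun i => (A i 1 1).re,
          fun i => (A i 0 1).re, fun i => (A i 0 1).im]
      have hA10 : ∀ i, A i 1 0 = starRingEnd ℂ (A i 0 1) := by
        intro i
        have := congrFun (congrFun (hA i) 1) 0
        simpa [Matrix.conjTranspose_apply, eq_comm] using this.symm
      have hdiag : ∀ i (p : Fin 2), (A i p p).im = 0 := by
        intro i p
        have := congrFun (congrFun (hA i) p) p
        rw [Matrix.conjTranspose_apply] at this
        exact Complex.conj_eq_iff_im.mp this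
      have h0 := hker 0
      have h1 := hker 1
      have h2 := hker 2
      have h3 := hker 3
      simp at h0 h1 h2 h3
      have hS : (∑ i, l i • A i) = 0 := by
        ext p q
        rw [Matrix.sum_apply]
        simp only [Matrix.smul_apply, Matrix.zero_apply]
        apply Complex.ext <;>
          simp [Complex.re_sum, Complex.im_sum, Complex.smul_re, Complex.smul_im]
        · fin_cases p <;> fin_cases q <;>
            simp_all [hA10, Complex.conj_re]
        · fin_cases p <;> fin_cases q <;>
            simp_all [hA10, hdiag, Complex.conj_im]
      have hAs : ∀ j : Fin r, ∑ i, (if i = j then (1:ℝ) else 0) • A i = A j := by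
        intro j
        simp [ite_smul, Finset.sum_ite_eq']
      have hj0 : ∀ j, l j = 0 := by
        intro j
        have hp := h (fun i => l i + if i = j then 1 else 0)
        have hm := h (fun i => l i - if i = j then 1 else 0)
        rw [show (∑ i, (l i + if i = j then (1:ℝ) else 0) • A i) = A j by
          simp only [add_smul, Finset.sum_add_distrib, hS, hAs, zero_add]] at hp
        rw [show (∑ i, (l i - if i = j then (1:ℝ) else 0) • A i) = -A j by
          simp only [sub_smul, Finset.sum_sub_distrib, hS, hAs, zero_sub],
          Matrix.det_neg] at hm
        simp only [Fintype.card_fin, neg_one_sq, one_mul] at hm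
        have := hp.symm.trans hm
        rw [Complex.ofReal_inj] at this
        exact lam_zero14 hr l j this
      exact hlne (funext hj0)
    · intro hle
      interval_cases r
      · refine ⟨![!![1,0;0,1]], ?_, ?_⟩
        · intro i
          fin_cases i <;>
            · ext a b
              fin_cases a <;> fin_cases b <;>
                simp [Matrix.conjTranspose_apply, Complex.ext_iff]
        · intro x
          rw [Finset.sum_erase_eq_sub (by simp)]
          rw [show (⟨0,hr⟩ : Fin 1) = 0 from rfl]
          simp [Fin.sum_univ_succ, Matrix.det_fin_two, Matrix.add_apply, Matrix.smul_apply,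
            Complex.ext_iff]
          ring_nf
          constructor <;> { simp [← Complex.ofReal_pow]; try ring }
      · refine ⟨![!![1,0;0,1], !![1,0;0,-1]], ?_, ?_⟩
        · intro i
          fin_cases i <;>
            · ext a b
              fin_cases a <;> fin_cases b <;>
                simp [Matrix.conjTranspose_apply, Complex.ext_iff]
        · intro x
          rw [Finset.sum_erase_eq_sub (by simp)]
          rw [show (⟨0,hr⟩ : Fin 2) = 0 from rfl]
          simp [Fin.sum_univ_succ, Matrix.det_fin_two, Matrix.add_apply, Matrix.smul_apply,
            Complex.ext_iff]
          ring_nf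
          constructor <;> { simp [← Complex.ofReal_pow]; try ring }
      · refine ⟨![!![1,0;0,1], !![1,0;0,-1], !![0,1;1,0]], ?_, ?_⟩
        · intro i
          fin_cases i <;>
            · ext a b
              fin_cases a <;> fin_cases b <;>
                simp [Matrix.conjTranspose_apply, Complex.ext_iff]
        · intro x
          rw [Finset.sum_erase_eq_sub (by simp)]
          rw [show (⟨0,hr⟩ : Fin 3) = 0 from rfl]
          simp [Fin.sum_univ_succ, Matrix.det_fin_two, Matrix.add_apply, Matrix.smul_apply,
            Complex.ext_iff]
          ring_nf
          constructor <;> { simp [← Complex.ofReal_pow]; try ring }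
      · refine ⟨![!![1,0;0,1], !![1,0;0,-1], !![0,1;1,0], !![0,Complex.I;-Complex.I,0]], ?_, ?_⟩
        · intro i
          fin_cases i <;>
            · ext a b
              fin_cases a <;> fin_cases b <;>
                simp [Matrix.conjTranspose_apply, Complex.ext_iff]
        · intro x
          rw [Finset.sum_erase_eq_sub (by simp)]
          rw [show (⟨0,hr⟩ : Fin 4) = 0 from rfl]
          simp [Fin.sum_univ_succ, Matrix.det_fin_two, Matrix.add_apply, Matrix.smul_apply,
            Complex.ext_iff]
          ring_nf
          constructor <;> { simp [← Complex.ofReal_pow]; try ring }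
  · constructor
    · rintro ⟨A, hA, h⟩
      by_contra hlt
      push_neg at hlt
      obtain ⟨l, hlne, hker⟩ := exists_ker14 hlt
        ![fun i => A i 0 0, fun i => A i 1 1, fun i => A i 0 1]
      have hA10 : ∀ i, A i 1 0 = A i 0 1 := by
        intro i
        have := congrFun (congrFun (hA i) 1) 0
        simpa [Matrix.transpose_apply] using this.symm
      have h0 := hker 0
      have h1 := hker 1
      have h2 := hker 2
      simp at h0 h1 h2
      have hS : (∑ i, l i • A i) = 0 := by
        ext p q
        rw [Matrix.sum_apply]
        simp only [Matrix.smul_apply, Matrix.zero_apply, smul_eq_mul]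
        fin_cases p <;> fin_cases q <;> simp_all [hA10]
      have hAs : ∀ j : Fin r, ∑ i, (if i = j then (1:ℝ) else 0) • A i = A j := by
        intro j
        simp [ite_smul, Finset.sum_ite_eq']
      have hj0 : ∀ j, l j = 0 := by
        intro j
        have hp := h (fun i => l i + if i = j then 1 else 0)
        have hm := h (fun i => l i - if i = j then 1 else 0)
        rw [show (∑ i, (l i + if i = j then (1:ℝ) else 0) • A i) = A j by
          simp only [add_smul, Finset.sum_add_distrib, hS, hAs, zero_add]] at hp
        rw [show (∑ i, (l i - if i = j then (1:ℝ) else 0) • A i) = -A j by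
          simp only [sub_smul, Finset.sum_sub_distrib, hS, hAs, zero_sub],
          Matrix.det_neg] at hm
        simp only [Fintype.card_fin, neg_one_sq, one_mul] at hm
        exact lam_zero14 hr l j (hp.symm.trans hm)
      exact hlne (funext hj0)
    · intro hle
      interval_cases r
      · refine ⟨![!![1,0;0,1]], ?_, ?_⟩
        · intro i
          fin_cases i <;>
            · ext a b
              fin_cases a <;> fin_cases b <;> simp [Matrix.IsSymm, Matrix.transpose_apply]
        · intro x
          rw [Finset.sum_erase_eq_sub (by simp)]
          rw [show (⟨0,hr⟩ : Fin 1) = 0 from rfl]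
          simp [Fin.sum_univ_succ, Matrix.det_fin_two, Matrix.add_apply, Matrix.smul_apply]
          ring
      · refine ⟨![!![1,0;0,1], !![1,0;0,-1]], ?_, ?_⟩
        · intro i
          fin_cases i <;>
            · ext a b
              fin_cases a <;> fin_cases b <;> simp [Matrix.IsSymm, Matrix.transpose_apply]
        · intro x
          rw [Finset.sum_erase_eq_sub (by simp)]
          rw [show (⟨0,hr⟩ : Fin 2) = 0 from rfl]
          simp [Fin.sum_univ_succ, Matrix.det_fin_two, Matrix.add_apply, Matrix.smul_apply]
          ring
      · refine ⟨![!![1,0;0,1], !![1,0;0,-1], !![0,1;1,0]], ?_, ?_⟩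
        · intro i
          fin_cases i <;>
            · ext a b
              fin_cases a <;> fin_cases b <;> simp [Matrix.IsSymm, Matrix.transpose_apply]
        · intro x
          rw [Finset.sum_erase_eq_sub (by simp)]
          rw [show (⟨0,hr⟩ : Fin 3) = 0 from rfl]
          simp [Fin.sum_univ_succ, Matrix.det_fin_two, Matrix.add_apply, Matrix.smul_apply]
          ring
end

section
/- Let X ⊆ V be a closed subset of a finite-dimensional real vector space, W ⊆ V a linear subspace with W + X = X, and π : V → V/W the projection (with some norm chosen on V/W). If x_* ∈ X is such that (x_*, X, V) is strongly star-shaped, then (π(x_*), π(X), V/W) is strongly star-shaped, and moreover the set of unit-sphere directions { π(x) ∈ S(V/W) : π(x_*) + s·π(x) ∈ π(X) for all s ≥ 0 } equals { π(x) ∈ S(V/W) : x_* + s·x ∈ X for all s ≥ 0 }. -/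
theorem stmt17 {V Q : Type*} [NormedAddCommGroup V] [NormedSpace ℝ V] [FiniteDimensional ℝ V]
    [NormedAddCommGroup Q] [NormedSpace ℝ Q] [FiniteDimensional ℝ Q]
    (X : Set V) (hX : IsClosed X) (W : Submodule ℝ V)
    (hWX : ∀ w ∈ W, ∀ x ∈ X, w + x ∈ X)
    (π : V →ₗ[ℝ] Q) (hsurj : Function.Surjective π) (hker : LinearMap.ker π = W)
    (x0 : V) (hx0 : x0 ∈ X)
    (hss : ∀ x ∈ X, ∀ t ∈ Set.Ico (0:ℝ) 1, x0 + t • (x - x0) ∈ interior X) :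
    (IsClosed (π '' X) ∧
      ∀ y ∈ π '' X, ∀ t ∈ Set.Ico (0:ℝ) 1, π x0 + t • (y - π x0) ∈ interior (π '' X)) ∧
    {z ∈ Metric.sphere (0:Q) 1 | ∀ s : ℝ, 0 ≤ s → π x0 + s • z ∈ π '' X} =
      {z ∈ Metric.sphere (0:Q) 1 | ∃ x : V, π x = z ∧ ∀ s : ℝ, 0 ≤ s → x0 + s • x ∈ X} := by
  -- X is saturated for π
  have sat : ∀ v : V, π v ∈ π '' X → v ∈ X := by
    rintro v ⟨x, hx, hvx⟩
    have hwmem : v - x ∈ LinearMap.ker π := by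
      simp [LinearMap.mem_ker, map_sub, hvx]
    have hw : v - x ∈ W := hker ▸ hwmem
    have := hWX _ hw x hx
    simpa using this
  have hopen : IsOpenMap π := by
    have h := ContinuousLinearMap.isOpenMap (LinearMap.toContinuousLinearMap π) hsurj
    simpa using h
  have hclosed : IsClosed (π '' X) := by
    rw [← isOpen_compl_iff]
    have hcompl : (π '' X)ᶜ = π '' Xᶜ := by
      ext q
      constructor
      · intro hq
        obtain ⟨v, rfl⟩ := hsurj q
        exact ⟨v, fun hv => hq ⟨v, hv, rfl⟩, rfl⟩
      · rintro ⟨v, hv, rfl⟩ hq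
        exact hv (sat v hq)
    rw [hcompl]
    exact hopen _ hX.isOpen_compl
  refine ⟨⟨hclosed, ?_⟩, ?_⟩
  · rintro y ⟨x, hx, rfl⟩ t ht
    have h1 : x0 + t • (x - x0) ∈ interior X := hss x hx t ht
    have h2 : π (x0 + t • (x - x0)) ∈ interior (π '' X) :=
      hopen.image_interior_subset X ⟨_, h1, rfl⟩
    simpa [map_add, map_smul, map_sub] using h2
  · ext z
    simp only [Set.mem_setOf_eq]
    constructor
    · rintro ⟨hz, h⟩
      obtain ⟨x, rfl⟩ := hsurj z
      refine ⟨hz, x, rfl, fun s hs => sat _ ?_⟩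
      have := h s hs
      simpa [map_add, map_smul] using this
    · rintro ⟨hz, x, rfl, h⟩
      exact ⟨hz, fun s hs => ⟨x0 + s • x, h s hs, by simp [map_add, map_smul]⟩⟩
end

section
/- Let b = (1 + √5)/2 be the golden ratio and consider the group homomorphism ψ_t : ⟨−1, b⟩ → ℝ_{>0}, x ↦ |x|^t, for t ∈ ℝ, where ⟨−1, b⟩ ≤ ℝ^× is the subgroup generated by −1 and b. If t > q > 0, then there exist a_1, a_2, a_3 in this subgroup with a_1 + a_2 + a_3 = 0 (namely a_1 = b², a_2 = −b, a_3 = −1) such that |a_1|^{t/q} > |a_2|^{t/q} + |a_3|^{t/q}; i.e., ψ_t fails the polygon inequality for exponent 1/q. -/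
theorem stmt18 (t q : ℝ) (hq : 0 < q) (htq : q < t) :
    ∃ a₁ a₂ a₃ : ℝ,
      (∃ n : ℤ, a₁ = ((1 + Real.sqrt 5)/2) ^ n ∨ a₁ = -((1 + Real.sqrt 5)/2) ^ n) ∧
      (∃ n : ℤ, a₂ = ((1 + Real.sqrt 5)/2) ^ n ∨ a₂ = -((1 + Real.sqrt 5)/2) ^ n) ∧
      (∃ n : ℤ, a₃ = ((1 + Real.sqrt 5)/2) ^ n ∨ a₃ = -((1 + Real.sqrt 5)/2) ^ n) ∧
      a₁ + a₂ + a₃ = 0 ∧ |a₂| ^ (t/q) + |a₃| ^ (t/q) < |a₁| ^ (t/q) := by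
  set b : ℝ := (1 + Real.sqrt 5)/2 with hb
  have h5 : Real.sqrt 5 ^ 2 = 5 := Real.sq_sqrt (by norm_num)
  have h5pos : (2:ℝ) < Real.sqrt 5 := by nlinarith [Real.sqrt_nonneg 5]
  have hb1 : 1 < b := by rw [hb]; nlinarith
  have hb0 : 0 < b := by linarith
  refine ⟨b ^ (2:ℤ), -b ^ (1:ℤ), -b ^ (0:ℤ), ⟨2, Or.inl rfl⟩, ⟨1, Or.inr rfl⟩,
    ⟨0, Or.inr rfl⟩, ?_, ?_⟩
  · have : b ^ 2 = b + 1 := by rw [hb]; nlinarith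
    simp only [zpow_two, zpow_one, zpow_zero]
    nlinarith
  · have hs : 1 < t / q := (one_lt_div hq).mpr htq
    have hx : b < b ^ (t/q) := by
      calc b = b ^ (1:ℝ) := (Real.rpow_one b).symm
      _ < b ^ (t/q) := Real.rpow_lt_rpow_of_exponent_lt hb1 hs
    have hxv : (b ^ 2) ^ (t/q) = (b ^ (t/q)) ^ 2 := by
      rw [← Real.rpow_natCast b 2, ← Real.rpow_natCast (b ^ (t/q)) 2,
        ← Real.rpow_mul hb0.le, ← Real.rpow_mul hb0.le]
      ring_nf
    have habs1 : |b ^ (2:ℤ)| = b ^ 2 := by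
      rw [abs_of_pos]; · rfl
      · positivity
    have habs2 : |-b ^ (1:ℤ)| = b := by
      rw [abs_neg, abs_of_pos] <;> simp [hb0]
    have habs3 : |-b ^ (0:ℤ)| = 1 := by simp
    rw [habs1, habs2, habs3, hxv, Real.one_rpow]
    nlinarith [Real.sqrt_nonneg 5]
end
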